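/- arXiv:2402.16231 — 6 statements merged into one kernel-verified Lean document; each statement's English description precedes it below -/
import Mathlib

section
/- Let L be a field whose characteristic is neither 2 nor 3, and let M be an L-linear representation of SL₂(ℤ) on which the matrix −I acts as the identity. Let S = [[0,1],[-1,0]], U = [[0,1],[-1,1]] ∈ SL₂(ℤ), and let s, u denote the linear automorphisms of M given by the actions of S and U (so s² = 1 and u³ = 1 on M). Set A = {v ∈ M : v + u v + u² v = 0}, let B ⊆ A be the image of {v ∈ M : s v = v} under (u − 1), and set H¹ = A/B. Let H¹_c = {f ∈ M* : f∘(1 + u + u²) = 0 and f∘s = −f}, where M* is the full linear dual of M. Then for every f ∈ H¹_c the linear functional v ↦ f((1 − u²)v) on A vanishes on B, and the induced map H¹_c → (A/B)* is an L-linear isomorphism. -/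
/-!
Write `N = 1 + u + u²`. Since `u³ = 1`, both `(1 - u)(1 - u²)` and `(1 - u²)(1 - u)` equal
`3 - N`, and `(1 - u)N = N(1 - u) = 0`. Hence `P = (1 - u)/3` maps `M` into `A = ker N`,
inverts `1 - u²` on `A`, and satisfies `(1 - u²)P = 1 - N/3`. So precomposition with `1 - u²`
and with `P` are mutually inverse between `H¹_c` and the functionals on `A` vanishing on `B`.
The vanishing holds because `2 f w = f (s w + w) = 0` for `f ∈ H¹_c` and `s w = w`, whence
`f ((1 - u²)(u - 1) w) = f ((N - 3) w) = 0`; conversely `P (s v + v) = (u - 1)(-(s v + v)/3)`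
lies in `B`, as `s v + v` is fixed by `s`.
-/
/-- `S = [[0,1],[-1,0]] ∈ SL₂(ℤ)`. -/
def SL2ZS : Matrix.SpecialLinearGroup (Fin 2) ℤ :=
  ⟨!![0, 1; -1, 0], by norm_num [Matrix.det_fin_two_of]⟩

/-- `U = [[0,1],[-1,1]] ∈ SL₂(ℤ)`. -/
def SL2ZU : Matrix.SpecialLinearGroup (Fin 2) ℤ :=
  ⟨!![0, 1; -1, 1], by norm_num [Matrix.det_fin_two_of]⟩

/-- `−I = [[-1,0],[0,-1]] ∈ SL₂(ℤ)`. -/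
def SL2ZnegI : Matrix.SpecialLinearGroup (Fin 2) ℤ :=
  ⟨!![-1, 0; 0, -1], by norm_num [Matrix.det_fin_two_of]⟩

variable {L : Type} [Field L] {M : Type} [AddCommGroup M] [Module L M]

/-- `A = {v ∈ M : v + u v + u² v = 0}`, where `u` is the action of `U`. -/
noncomputable def kerOnePlusUPlusUSq
    (ρ : Representation L (Matrix.SpecialLinearGroup (Fin 2) ℤ) M) : Submodule L M :=
  LinearMap.ker ((1 : Module.End L M) + ρ SL2ZU + ρ SL2ZU * ρ SL2ZU)

/-- `B = (u − 1)(M^{s=1})`, the image under `u − 1` of the `s`-fixed vectors. -/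
noncomputable def imageUSubOneOfSFixed
    (ρ : Representation L (Matrix.SpecialLinearGroup (Fin 2) ℤ) M) : Submodule L M :=
  Submodule.map (ρ SL2ZU - 1) (LinearMap.ker (ρ SL2ZS - (1 : Module.End L M)))

/-- `B` viewed inside `A`. -/
noncomputable def imageUSubOneOfSFixed'
    (ρ : Representation L (Matrix.SpecialLinearGroup (Fin 2) ℤ) M) :
    Submodule L (kerOnePlusUPlusUSq ρ) :=
  (imageUSubOneOfSFixed ρ).comap (kerOnePlusUPlusUSq ρ).subtype

/-- `H¹_c = {f ∈ M* : f∘(1 + u + u²) = 0 and f∘(s + 1) = 0}`. -/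
noncomputable def H1cDual
    (ρ : Representation L (Matrix.SpecialLinearGroup (Fin 2) ℤ) M) :
    Submodule L (Module.Dual L M) :=
  LinearMap.ker (((1 : Module.End L M) + ρ SL2ZU + ρ SL2ZU * ρ SL2ZU).dualMap) ⊓
    LinearMap.ker ((ρ SL2ZS + (1 : Module.End L M)).dualMap)

theorem SL2ZU_pow_three : SL2ZU ^ 3 = SL2ZnegI := by decide

theorem SL2ZS_sq : SL2ZS ^ 2 = SL2ZnegI := by decide

section CubeRootOfUnity

variable {R : Type*} [Ring R] {u : R}

theorem one_sub_mul_one_add_add_mul_self (hu : u ^ 3 = 1) :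
    (1 - u) * (1 + u + u * u) = 0 := by
  calc (1 - u) * (1 + u + u * u) = 1 - u ^ 3 := by noncomm_ring
    _ = 0 := by rw [hu, sub_self]

theorem one_add_add_mul_self_mul_one_sub (hu : u ^ 3 = 1) :
    (1 + u + u * u) * (1 - u) = 0 := by
  calc (1 + u + u * u) * (1 - u) = 1 - u ^ 3 := by noncomm_ring
    _ = 0 := by rw [hu, sub_self]

theorem one_sub_mul_one_sub_mul_self (hu : u ^ 3 = 1) :
    (1 - u) * (1 - u * u) = 3 - (1 + u + u * u) := by
  calc (1 - u) * (1 - u * u) = 3 - (1 + u + u * u) + (u ^ 3 - 1) := by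
        rw [show (3 : R) = 1 + 1 + 1 by norm_num]; noncomm_ring
    _ = 3 - (1 + u + u * u) := by rw [hu, sub_self, add_zero]

theorem one_sub_mul_self_mul_one_sub (hu : u ^ 3 = 1) :
    (1 - u * u) * (1 - u) = 3 - (1 + u + u * u) := by
  calc (1 - u * u) * (1 - u) = 3 - (1 + u + u * u) + (u ^ 3 - 1) := by
        rw [show (3 : R) = 1 + 1 + 1 by norm_num]; noncomm_ring
    _ = 3 - (1 + u + u * u) := by rw [hu, sub_self, add_zero]

end CubeRootOfUnity

section H1cDual

variable {ρ : Representation L (Matrix.SpecialLinearGroup (Fin 2) ℤ) M}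

theorem mem_H1cDual_iff {f : Module.Dual L M} :
    f ∈ H1cDual ρ ↔ (∀ v, f ((1 + ρ SL2ZU + ρ SL2ZU * ρ SL2ZU) v) = 0) ∧
      ∀ v, f (ρ SL2ZS v + v) = 0 := by
  simp only [H1cDual, Submodule.mem_inf, LinearMap.mem_ker, LinearMap.ext_iff,
    LinearMap.dualMap_apply, LinearMap.zero_apply, LinearMap.add_apply, Module.End.one_apply]

theorem apply_eq_zero_of_mem_H1cDual_of_fixed (h2 : (2 : L) ≠ 0) {f : Module.Dual L M}
    (hf : f ∈ H1cDual ρ) {w : M} (hw : ρ SL2ZS w = w) : f w = 0 := by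
  have h := (mem_H1cDual_iff.1 hf).2 w
  rw [hw, ← two_smul L w, map_smul, smul_eq_mul] at h
  exact (mul_eq_zero.1 h).resolve_left h2

theorem apply_one_sub_mul_self_eq_zero_of_mem_H1cDual (h2 : (2 : L) ≠ 0)
    (hU : ρ SL2ZU ^ 3 = 1) {f : Module.Dual L M} (hf : f ∈ H1cDual ρ) {v : M}
    (hv : v ∈ imageUSubOneOfSFixed ρ) : f ((1 - ρ SL2ZU * ρ SL2ZU) v) = 0 := by
  obtain ⟨w, hw, rfl⟩ := hv
  have hsw : ρ SL2ZS w = w := sub_eq_zero.1 hw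
  rw [← Module.End.mul_apply, ← neg_sub 1 (ρ SL2ZU), mul_neg, one_sub_mul_self_mul_one_sub hU,
    LinearMap.neg_apply, LinearMap.sub_apply, map_neg, map_sub, (mem_H1cDual_iff.1 hf).1 w,
    Module.End.ofNat_apply, map_nsmul, apply_eq_zero_of_mem_H1cDual_of_fixed h2 hf hsw,
    smul_zero, sub_zero, neg_zero]

theorem inv_three_smul_three_apply (h3 : (3 : L) ≠ 0) (v : M) :
    (3 : L)⁻¹ • (3 : Module.End L M) v = v := by
  rw [Module.End.ofNat_apply, ← ofNat_smul_eq_nsmul L, inv_smul_smul₀ h3]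

noncomputable def projKerOnePlusUPlusUSq (hU : ρ SL2ZU ^ 3 = 1) :
    M →ₗ[L] kerOnePlusUPlusUSq ρ :=
  LinearMap.codRestrict _ ((3 : L)⁻¹ • (1 - ρ SL2ZU)) fun v => by
    rw [kerOnePlusUPlusUSq, LinearMap.mem_ker, LinearMap.smul_apply, map_smul,
      ← Module.End.mul_apply, one_add_add_mul_self_mul_one_sub hU, LinearMap.zero_apply,
      smul_zero]

variable {hU : ρ SL2ZU ^ 3 = 1}

@[simp]
theorem coe_projKerOnePlusUPlusUSq (v : M) :
    (projKerOnePlusUPlusUSq hU v : M) = (3 : L)⁻¹ • (1 - ρ SL2ZU) v :=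
  rfl

theorem projKerOnePlusUPlusUSq_one_sub_mul_self (h3 : (3 : L) ≠ 0) (a : kerOnePlusUPlusUSq ρ) :
    projKerOnePlusUPlusUSq hU ((1 - ρ SL2ZU * ρ SL2ZU) a) = a := by
  ext
  rw [coe_projKerOnePlusUPlusUSq, ← Module.End.mul_apply, one_sub_mul_one_sub_mul_self hU,
    LinearMap.sub_apply, LinearMap.mem_ker.1 a.2, sub_zero, inv_three_smul_three_apply h3]

theorem one_sub_mul_self_projKerOnePlusUPlusUSq (h3 : (3 : L) ≠ 0) (v : M) :
    (1 - ρ SL2ZU * ρ SL2ZU) (projKerOnePlusUPlusUSq hU v : M)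
      = v - (3 : L)⁻¹ • (1 + ρ SL2ZU + ρ SL2ZU * ρ SL2ZU) v := by
  rw [coe_projKerOnePlusUPlusUSq, map_smul, ← Module.End.mul_apply,
    one_sub_mul_self_mul_one_sub hU, LinearMap.sub_apply, smul_sub, inv_three_smul_three_apply h3]

theorem projKerOnePlusUPlusUSq_one_add_add_mul_self (v : M) :
    projKerOnePlusUPlusUSq hU ((1 + ρ SL2ZU + ρ SL2ZU * ρ SL2ZU) v) = 0 := by
  ext
  rw [coe_projKerOnePlusUPlusUSq, ← Module.End.mul_apply, one_sub_mul_one_add_add_mul_self hU,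
    LinearMap.zero_apply, smul_zero, ZeroMemClass.coe_zero]

theorem projKerOnePlusUPlusUSq_add_self_mem (hS : ρ SL2ZS ^ 2 = 1) (v : M) :
    projKerOnePlusUPlusUSq hU (ρ SL2ZS v + v) ∈ imageUSubOneOfSFixed' ρ := by
  have hfixed : ρ SL2ZS (ρ SL2ZS v + v) = ρ SL2ZS v + v := by
    rw [map_add, ← Module.End.mul_apply, ← sq, hS, Module.End.one_apply, add_comm]
  refine ⟨-(3 : L)⁻¹ • (ρ SL2ZS v + v), ?_, ?_⟩
  · rw [SetLike.mem_coe, LinearMap.mem_ker, map_smul, LinearMap.sub_apply, hfixed,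
      Module.End.one_apply, sub_self, smul_zero]
  · rw [Submodule.subtype_apply, coe_projKerOnePlusUPlusUSq, map_smul, neg_smul, ← smul_neg,
      ← LinearMap.neg_apply, neg_sub]

variable (hU) in
noncomputable def H1cDualEquivDualAnnihilator (h2 : (2 : L) ≠ 0) (h3 : (3 : L) ≠ 0)
    (hS : ρ SL2ZS ^ 2 = 1) : H1cDual ρ ≃ₗ[L] (imageUSubOneOfSFixed' ρ).dualAnnihilator :=
  LinearEquiv.ofLinearMap
    ((((1 - ρ SL2ZU * ρ SL2ZU) ∘ₗ (kerOnePlusUPlusUSq ρ).subtype).dualMap ∘ₗ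
        (H1cDual ρ).subtype).codRestrict _ fun f =>
      (Submodule.mem_dualAnnihilator _).2 fun _ ha => by
        rw [LinearMap.comp_apply, LinearMap.dualMap_apply]
        exact apply_one_sub_mul_self_eq_zero_of_mem_H1cDual h2 hU f.2 ha)
    (((projKerOnePlusUPlusUSq hU).dualMap ∘ₗ
        (imageUSubOneOfSFixed' ρ).dualAnnihilator.subtype).codRestrict _ fun g =>
      mem_H1cDual_iff.2
        ⟨fun v => by
          rw [LinearMap.comp_apply, LinearMap.dualMap_apply,
            projKerOnePlusUPlusUSq_one_add_add_mul_self, map_zero],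
          fun v => (Submodule.mem_dualAnnihilator _).1 g.2 _
            (projKerOnePlusUPlusUSq_add_self_mem hS v)⟩)
    (by
      ext g a
      simp only [LinearMap.comp_apply, LinearMap.codRestrict_apply, LinearMap.dualMap_apply,
        Submodule.subtype_apply, LinearMap.id_apply]
      rw [projKerOnePlusUPlusUSq_one_sub_mul_self h3])
    (by
      ext f v
      simp only [LinearMap.comp_apply, LinearMap.codRestrict_apply, LinearMap.dualMap_apply,
        Submodule.subtype_apply, LinearMap.id_apply]
      rw [one_sub_mul_self_projKerOnePlusUPlusUSq h3, map_sub, map_smul,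
        (mem_H1cDual_iff.1 f.2).1, smul_zero, sub_zero])

end H1cDual

/-- for a representation of `SL₂(ℤ)` over a field of characteristic `≠ 2, 3`
on which `−I` acts trivially, the pairing `f ↦ (v ↦ f((1 − u²)v))` identifies
`H¹_c = (M*)^{1+U+U²=0} ∩ (M*)^{1+S=0}` with the dual of `H¹ = A/B`. -/
theorem h1c_dual_iso_dual_h1
    (h2 : (2 : L) ≠ 0) (h3 : (3 : L) ≠ 0)
    (ρ : Representation L (Matrix.SpecialLinearGroup (Fin 2) ℤ) M)
    (hI : ρ SL2ZnegI = 1) :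
    (∀ f ∈ H1cDual ρ, ∀ v ∈ imageUSubOneOfSFixed ρ,
      f (((1 : Module.End L M) - ρ SL2ZU * ρ SL2ZU) v) = 0) ∧
    ∃ Φ : H1cDual ρ →ₗ[L]
        Module.Dual L (kerOnePlusUPlusUSq ρ ⧸ imageUSubOneOfSFixed' ρ),
      (∀ (f : H1cDual ρ) (a : kerOnePlusUPlusUSq ρ),
        Φ f (Submodule.Quotient.mk a)
          = (f : Module.Dual L M) (((1 : Module.End L M) - ρ SL2ZU * ρ SL2ZU) (a : M))) ∧
      Function.Bijective Φ := by
  have hU : ρ SL2ZU ^ 3 = 1 := by rw [← map_pow, SL2ZU_pow_three, hI]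
  have hS : ρ SL2ZS ^ 2 = 1 := by rw [← map_pow, SL2ZS_sq, hI]
  let Φ := (H1cDualEquivDualAnnihilator hU h2 h3 hS).trans
    (imageUSubOneOfSFixed' ρ).dualQuotEquivDualAnnihilator.symm
  exact ⟨fun f hf v hv => apply_one_sub_mul_self_eq_zero_of_mem_H1cDual h2 hU hf hv,
    Φ.toLinearMap, fun f a => rfl, Φ.bijective⟩
end

section
/- Let Ẑ denote the topological ring ∏_ℓ ℤ_ℓ, the product over all prime numbers ℓ of the rings of ℓ-adic integers, with the product topology, and let p be a fixed prime. For every continuous function f : Ẑ → ℚ_p there exists a continuous function g : Ẑ → ℚ_p such that g(x) − g(x − 1) = f(x) for all x ∈ Ẑ (here 1 is the multiplicative identity of Ẑ). Equivalently, H¹(ℤ, C(Ẑ, ℚ_p)) = 0, where ℤ acts on continuous functions by translation. -/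
open scoped ContinuousMap

instance (q : Nat.Primes) : Fact (Nat.Prime (q : ℕ)) := ⟨q.2⟩

/-- `Ẑ = ∏_ℓ ℤ_ℓ`, the product over all primes of the `ℓ`-adic integers, with the
product topology. -/
abbrev ZhatProd : Type := ∀ q : Nat.Primes, ℤ_[(q : ℕ)]

/-!
Choose `S : ℤ → ℚ_p` with `S n - S (n - 1) = f n` (the partial sums of `f` along `ℤ`). If `S` is
uniformly continuous for the topology that `Ẑ` induces on its dense subring `ℤ`, it extends to a
continuous `g` on `Ẑ`, and `g x - g (x - 1) = f x` passes from `ℤ` to `Ẑ` by density.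

Uniform continuity comes from the smallness of block sums. If `f` varies by at most `ε` on the
cosets of `N Ẑ`, a block of `N p^m` consecutive values of `f` splits into `N` sums of `p^m` terms,
each within `ε` of `p^m f(j)`, whose norm is at most `p^{-m} ‖f‖`. So `‖S (n + N p^m) - S n‖ ≤ ε`,
and by the ultrametric inequality the same bound holds for `S n' - S n` whenever
`N p^m ∣ n' - n`, a condition that is open in the topology of `Ẑ`.
-/

open Filter Topology
open scoped Uniformity

theorem sum_range_mul_eq {M : Type*} [AddCommMonoid M] (u : ℕ → M) (N K : ℕ) :
    ∑ k ∈ Finset.range (N * K), u k =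
      ∑ j ∈ Finset.range N, ∑ t ∈ Finset.range K, u (j + N * t) := by
  induction K with
  | zero => simp
  | succ K ih =>
    rw [Nat.mul_succ, Finset.sum_range_add, ih, ← Finset.sum_add_distrib]
    refine Finset.sum_congr rfl fun j _ => ?_
    rw [Finset.sum_range_succ, add_comm j]

theorem norm_sum_range_mul_le {K : Type*} [NormedRing K] [IsUltrametricDist K] (u : ℕ → K)
    {N M : ℕ} {C ε : ℝ} (hε : 0 ≤ ε) (hC : ∀ k, ‖u k‖ ≤ C) (hM : ‖(M : K)‖ * C ≤ ε)
    (hu : ∀ j t, ‖u (j + N * t) - u j‖ ≤ ε) :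
    ‖∑ k ∈ Finset.range (N * M), u k‖ ≤ ε := by
  rw [sum_range_mul_eq]
  refine IsUltrametricDist.norm_sum_le_of_forall_le_of_nonneg hε fun j _ => ?_
  have hsplit : ∑ t ∈ Finset.range M, u (j + N * t) =
      ∑ t ∈ Finset.range M, (u (j + N * t) - u j) + (M : K) * u j := by
    simp [Finset.sum_sub_distrib, nsmul_eq_mul]
  rw [hsplit]
  refine (IsUltrametricDist.norm_add_le_max _ _).trans (max_le ?_ ?_)
  · exact IsUltrametricDist.norm_sum_le_of_forall_le_of_nonneg hε fun t _ => hu j t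
  · calc ‖(M : K) * u j‖ ≤ ‖(M : K)‖ * ‖u j‖ := norm_mul_le _ _
      _ ≤ ‖(M : K)‖ * C := by gcongr; exact hC j
      _ ≤ ε := hM

theorem norm_sub_le_of_dvd_sub {E : Type*} [SeminormedAddCommGroup E] [IsUltrametricDist E]
    {F : ℤ → E} {N : ℤ} {ε : ℝ} (h : ∀ n, ‖F (n + N) - F n‖ ≤ ε) {m n : ℤ} (hmn : N ∣ m - n) :
    ‖F m - F n‖ ≤ ε := by
  obtain ⟨t, ht⟩ := hmn
  obtain rfl : m = n + N * t := by linarith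
  clear ht
  induction t using Int.induction_on with
  | zero => simpa using (norm_nonneg _).trans (h n)
  | succ t ih =>
    rw [show n + N * (t + 1) = n + N * t + N by ring, ← sub_add_sub_cancel _ (F (n + N * t))]
    exact (IsUltrametricDist.norm_add_le_max _ _).trans (max_le (h _) ih)
  | pred t ih =>
    have hstep := h (n + N * (-t - 1))
    rw [show n + N * (-t - 1) + N = n + N * -t by ring, norm_sub_rev] at hstep
    rw [← sub_add_sub_cancel _ (F (n + N * -t))]
    exact (IsUltrametricDist.norm_add_le_max _ _).trans (max_le hstep ih)

theorem exists_sub_pred_eq {M : Type*} [AddCommGroup M] (u : ℤ → M) :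
    ∃ S : ℤ → M, ∀ n, S n - S (n - 1) = u n := by
  refine ⟨fun n => ∑ k ∈ Finset.range n.toNat, u (k + 1) - ∑ k ∈ Finset.range (-n).toNat, u (-k),
    fun n => ?_⟩
  dsimp only
  rcases le_or_gt n 0 with hn | hn
  · have h1 : (-(n - 1)).toNat = (-n).toNat + 1 := by omega
    rw [Int.toNat_of_nonpos hn, Int.toNat_of_nonpos (by omega : n - 1 ≤ 0), h1,
      Finset.sum_range_succ, Int.toNat_of_nonneg (by omega : 0 ≤ -n)]
    simp
  · have h1 : n.toNat = (n - 1).toNat + 1 := by omega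
    rw [h1, Finset.sum_range_succ, Int.toNat_of_nonpos (by omega : -n ≤ 0),
      Int.toNat_of_nonpos (by omega : -(n - 1) ≤ 0), Int.toNat_of_nonneg (by omega)]
    simp

theorem sub_eq_sum_range_of_sub_pred_eq {M : Type*} [AddCommGroup M] {S u : ℤ → M}
    (hS : ∀ n, S n - S (n - 1) = u n) (n : ℤ) (L : ℕ) :
    S (n + L) - S n = ∑ k ∈ Finset.range L, u (n + k + 1) := by
  refine (Finset.sum_range_induction _ (fun L : ℕ => S (n + L) - S n) (by simp) L
    fun k _ => ?_).symm
  rw [← hS (n + k + 1)]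
  push_cast
  rw [add_sub_cancel_right, ← add_assoc]
  abel

theorem DenseRange.exists_continuous_extend {α β γ : Type*} [UniformSpace α] [UniformSpace γ]
    [CompleteSpace γ] [T0Space γ] {e : β → α} (he : DenseRange e) {f : β → γ}
    (hf : Tendsto (Prod.map f f) (comap (Prod.map e e) (𝓤 α)) (𝓤 γ)) :
    ∃ g : C(α, γ), ∀ b, g (e b) = f b := by
  let _ : UniformSpace β := UniformSpace.comap e ‹_›
  have he' : IsUniformInducing e := ⟨rfl⟩
  exact ⟨⟨_, (uniformContinuous_uniformly_extend he' he hf).continuous⟩,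
    uniformly_extend_of_ind he' he hf⟩

theorem PadicInt.exists_pow_dvd_sub_imp_mem {p : ℕ} [Fact p.Prime] {y : ℤ_[p]} {t : Set ℤ_[p]}
    (ht : t ∈ 𝓝 y) : ∃ v : ℕ, ∀ z, (p : ℤ_[p]) ^ v ∣ z - y → z ∈ t := by
  obtain ⟨ε, hε, hball⟩ := Metric.mem_nhds_iff.mp ht
  have hp : ‖(p : ℤ_[p])‖ < 1 := by
    rw [PadicInt.norm_p]
    exact inv_lt_one_of_one_lt₀ (mod_cast (Fact.out : p.Prime).one_lt)
  obtain ⟨v, hv⟩ := exists_pow_lt_of_lt_one hε hp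
  refine ⟨v, fun z ⟨c, hc⟩ => hball ?_⟩
  rw [Metric.mem_ball, dist_eq_norm, hc, norm_mul, norm_pow]
  exact (mul_le_of_le_one_right (by positivity) c.norm_le_one).trans_lt hv

theorem Int.natCast_dvd_of_forall_padicInt_norm_le {N : ℕ} {m : ℤ}
    (h : ∀ q : Nat.Primes, ‖(m : ℤ_[q])‖ ≤ ‖(N : ℤ_[q])‖) : (N : ℤ) ∣ m := by
  rw [← Int.dvd_natAbs, Int.natCast_dvd_natCast, Nat.dvd_iff_prime_pow_dvd_dvd]
  intro q k hq hqk
  have : Fact q.Prime := ⟨hq⟩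
  have hN : ‖((N : ℤ) : ℤ_[q])‖ ≤ (q : ℝ) ^ (-(k : ℤ)) :=
    PadicInt.norm_int_le_pow_iff_dvd.mpr (mod_cast hqk)
  have hm := PadicInt.norm_int_le_pow_iff_dvd.mp ((h ⟨q, hq⟩).trans (mod_cast hN))
  rw [← Int.dvd_natAbs] at hm
  exact_mod_cast hm

namespace ZhatProd

theorem exists_forall_pow_dvd_sub_imp_mem {x : ZhatProd} {W : Set ZhatProd} (hW : W ∈ 𝓝 x) :
    ∃ (I : Finset Nat.Primes) (v : Nat.Primes → ℕ), ∀ y : ZhatProd,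
      (∀ q ∈ I, ((q : ℕ) : ℤ_[q]) ^ v q ∣ y q - x q) → y ∈ W := by
  rw [nhds_pi, Filter.mem_pi] at hW
  obtain ⟨I, hI, t, ht, hsub⟩ := hW
  choose v hv using fun q => PadicInt.exists_pow_dvd_sub_imp_mem (ht q)
  exact ⟨hI.toFinset, v, fun y hy => hsub fun q hq => hv q _ (hy q (hI.mem_toFinset.mpr hq))⟩

theorem exists_natCast_mul_mem {W : Set ZhatProd} (hW : W ∈ 𝓝 0) :
    ∃ N : ℕ, N ≠ 0 ∧ ∀ z : ZhatProd, (N : ZhatProd) * z ∈ W := by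
  obtain ⟨I, v, hW⟩ := exists_forall_pow_dvd_sub_imp_mem hW
  refine ⟨∏ q ∈ I, (q : ℕ) ^ v q, Finset.prod_ne_zero_iff.mpr fun q _ => pow_ne_zero _ q.2.ne_zero,
    fun z => hW _ fun q hq => ?_⟩
  obtain ⟨c, hc⟩ := Finset.dvd_prod_of_mem (fun q : Nat.Primes => (q : ℕ) ^ v q) hq
  refine ⟨c * z q, ?_⟩
  simp [hc, mul_assoc]

theorem denseRange_intCast : DenseRange (Int.cast : ℤ → ZhatProd) := by
  refine fun x => mem_closure_iff_nhds.mpr fun W hW => ?_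
  obtain ⟨I, v, hW⟩ := exists_forall_pow_dvd_sub_imp_mem hW
  obtain ⟨n, hn⟩ := Nat.chineseRemainderOfFinset (fun q => (x q).appr (v q))
    (fun q : Nat.Primes => (q : ℕ) ^ v q) I (fun q _ => pow_ne_zero _ q.2.ne_zero)
    fun q _ r _ hqr => Nat.Coprime.pow _ _ ((Nat.coprime_primes q.2 r.2).mpr
      (Nat.Primes.coe_nat_injective.ne hqr))
  refine ⟨n, hW _ fun q hq => ?_, n, rfl⟩
  have happr : ((q : ℕ) : ℤ_[q]) ^ v q ∣ x q - (x q).appr (v q) :=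
    Ideal.mem_span_singleton.mp (PadicInt.appr_spec _ _)
  have hcrt : ((q : ℕ) : ℤ_[q]) ^ v q ∣ (n : ℤ_[q]) - (x q).appr (v q) := by
    simpa using (Int.castRingHom ℤ_[q]).map_dvd (Nat.modEq_iff_dvd.mp (hn q hq).symm)
  simpa using dvd_sub hcrt happr

theorem eventually_dvd_sub {N : ℕ} (hN : N ≠ 0) :
    ∀ᶠ mn : ℤ × ℤ in comap (Prod.map Int.cast Int.cast) (𝓤 ZhatProd), (N : ℤ) ∣ mn.1 - mn.2 := by
  have hs : {q : Nat.Primes | (q : ℕ) ∣ N}.Finite :=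
    (N.divisors.finite_toSet.preimage Nat.Primes.coe_nat_injective.injOn).subset
      fun q hq => Nat.mem_divisors.mpr ⟨hq, hN⟩
  have hball (q : Nat.Primes) : {x : ZhatProd | ‖x q‖ ≤ ‖(N : ℤ_[q])‖} ∈ 𝓝 0 := by
    have hq : Continuous fun x : ZhatProd => x q := continuous_apply q
    simpa [Set.preimage] using (hq.continuousAt (x := 0)).preimage_mem_nhds
      (Metric.closedBall_mem_nhds (0 : ℤ_[q]) (norm_pos_iff.mpr (Nat.cast_ne_zero.mpr hN)))
  have hU : {x : ZhatProd | ∀ q : Nat.Primes, ‖x q‖ ≤ ‖(N : ℤ_[q])‖} ∈ 𝓝 0 := by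
    refine mem_of_superset ((Filter.biInter_mem hs).mpr fun q _ => hball q) fun x hx q => ?_
    by_cases hq : (q : ℕ) ∣ N
    · exact Set.mem_iInter₂.mp hx q hq
    · rw [PadicInt.norm_natCast_eq_one_iff.mpr ((Nat.Prime.coprime_iff_not_dvd q.2).mpr hq)]
      exact (x q).norm_le_one
  rw [uniformity_eq_comap_nhds_zero ZhatProd]
  filter_upwards [preimage_mem_comap (preimage_mem_comap hU)] with mn hmn
  refine (dvd_sub_comm).mp (Int.natCast_dvd_of_forall_padicInt_norm_le fun q => ?_)
  simpa using hmn q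

theorem exists_dist_add_natCast_mul_lt {E : Type*} [PseudoMetricSpace E] (f : C(ZhatProd, E))
    {ε : ℝ} (hε : 0 < ε) : ∃ N : ℕ, N ≠ 0 ∧ ∀ x z : ZhatProd, dist (f (x + N * z)) (f x) < ε := by
  have hf :=
    CompactSpace.uniformContinuous_of_continuous f.continuous (Metric.dist_mem_uniformity hε)
  rw [uniformity_eq_comap_nhds_zero ZhatProd] at hf
  obtain ⟨W, hW, hWf⟩ := hf
  obtain ⟨N, hN, hNW⟩ := exists_natCast_mul_mem hW
  refine ⟨N, hN, fun x z => ?_⟩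
  rw [dist_comm]
  exact hWf (show (x, x + N * z) ∈ _ by simpa using hNW z)

theorem exists_norm_sum_range_le {p : ℕ} [Fact p.Prime] (f : C(ZhatProd, ℚ_[p])) {ε : ℝ}
    (hε : 0 < ε) : ∃ N : ℕ, N ≠ 0 ∧ ∀ x : ZhatProd, ‖∑ k ∈ Finset.range N, f (x + k)‖ ≤ ε := by
  obtain ⟨N, hN, hf⟩ := exists_dist_add_natCast_mul_lt f hε
  have hp : ‖(p : ℚ_[p])‖ < 1 := by
    rw [Padic.norm_p]
    exact inv_lt_one_of_one_lt₀ (mod_cast (Fact.out : p.Prime).one_lt)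
  obtain ⟨m, hm⟩ : ∃ m : ℕ, ‖(p : ℚ_[p])‖ ^ m * ‖f‖ ≤ ε :=
    (((tendsto_pow_atTop_nhds_zero_of_lt_one (norm_nonneg _) hp).mul_const ‖f‖).eventually
      (ge_mem_nhds (by simpa using hε))).exists
  refine ⟨N * p ^ m, mul_ne_zero hN (pow_ne_zero _ (Fact.out : p.Prime).ne_zero), fun x =>
    norm_sum_range_mul_le _ hε.le (fun k => f.norm_coe_le_norm _) (by simpa using hm)
      fun j t => ?_⟩
  rw [← dist_eq_norm, show x + ((j + N * t : ℕ) : ZhatProd) = x + j + N * t by push_cast; ring]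
  exact (hf (x + j) t).le

theorem tendsto_uniformity_of_sub_pred_eq {p : ℕ} [Fact p.Prime]
    (f : C(ZhatProd, ℚ_[p])) {S : ℤ → ℚ_[p]} (hS : ∀ n, S n - S (n - 1) = f n) :
    Tendsto (Prod.map S S) (comap (Prod.map Int.cast Int.cast) (𝓤 ZhatProd)) (𝓤 ℚ_[p]) := by
  refine Metric.uniformity_basis_dist_le.tendsto_right_iff.mpr fun ε hε => ?_
  obtain ⟨N, hN, hblock⟩ := exists_norm_sum_range_le f hε
  have hstep (n : ℤ) : ‖S (n + N) - S n‖ ≤ ε := by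
    rw [sub_eq_sum_range_of_sub_pred_eq hS]
    convert hblock ((n + 1 : ℤ) : ZhatProd) using 4 with k
    push_cast
    ring
  filter_upwards [eventually_dvd_sub hN] with mn h
  rw [dist_eq_norm]
  exact norm_sub_le_of_dvd_sub hstep h

end ZhatProd

/-- for every continuous `f : Ẑ → ℚ_p` there is a continuous `g : Ẑ → ℚ_p`
with `g x - g (x - 1) = f x` for all `x`; i.e. `H¹(ℤ, C(Ẑ, ℚ_p)) = 0`. -/
theorem exists_continuous_primitive_on_Zhat
    (p : ℕ) [Fact p.Prime] (f : C(ZhatProd, ℚ_[p])) :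
    ∃ g : C(ZhatProd, ℚ_[p]), ∀ x : ZhatProd, g x - g (x - 1) = f x := by
  obtain ⟨S, hS⟩ := exists_sub_pred_eq fun n : ℤ => f n
  obtain ⟨g, hg⟩ := ZhatProd.denseRange_intCast.exists_continuous_extend
    (ZhatProd.tendsto_uniformity_of_sub_pred_eq f hS)
  refine ⟨g, congr_fun (ZhatProd.denseRange_intCast.equalizer (by fun_prop) f.continuous
    (funext fun n => ?_))⟩
  simp only [Function.comp_apply]
  rw [← Int.cast_one, ← Int.cast_sub, hg, hg, hS]
end

section
/- Let p be a prime number, let k be a commutative ring in which p · 1 = 0, let N ≥ 1 be an integer, and let φ : ℤ/Nℤ → k be any function. Then there exists a function ψ : ℤ/(Np)ℤ → k such that for every integer x, ψ(x mod Np) − ψ((x − 1) mod Np) = φ(x mod N). -/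
/-!
The discrete primitive `F` of `x ↦ φ (x mod N)` on `ℤ` satisfies `F (x + N) = F x + F N`, because
`x ↦ F (x + N) - F x` has vanishing difference. Hence `F (x + N p) = F x + p • F N = F x` when
`p = 0` in `k`, so `F` descends to `ℤ/Np`.
-/

open Finset

section

variable {k : Type*} [AddCommGroup k]

noncomputable def intPrimitive (f : ℤ → k) (x : ℤ) : k :=
  ∑ i ∈ Ioc 0 x, f i - ∑ i ∈ Ioc x 0, f i

theorem intPrimitive_add_one_sub (f : ℤ → k) (x : ℤ) :
    intPrimitive f (x + 1) - intPrimitive f x = f (x + 1) := by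
  unfold intPrimitive
  rcases le_or_gt 0 x with hx | hx
  · rw [← Order.succ_eq_add_one, ← insert_Ioc_right_eq_Ioc_succ hx, Order.succ_eq_add_one,
      sum_insert (by simp), Ioc_eq_empty_of_le hx, Ioc_eq_empty_of_le (by omega : (0 : ℤ) ≤ x + 1)]
    abel
  · rw [← insert_Ioc_succ_left_eq_Ioc hx, Order.succ_eq_add_one, sum_insert (by simp),
      Ioc_eq_empty_of_le hx.le, Ioc_eq_empty_of_le (by omega : x + 1 ≤ 0)]
    abel

@[simp] theorem intPrimitive_zero (f : ℤ → k) : intPrimitive f 0 = 0 := by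
  simp [intPrimitive]

theorem intPrimitive_add_period {f : ℤ → k} {c : ℤ} (hf : Function.Periodic f c) (x : ℤ) :
    intPrimitive f (x + c) = intPrimitive f x + intPrimitive f c := by
  set G : ℤ → k := fun y => intPrimitive f (y + c) - intPrimitive f y
  have hG : Function.Periodic G 1 := fun y => by
    have h := congrArg₂ (· - ·) (intPrimitive_add_one_sub f (y + c))
      (intPrimitive_add_one_sub f y)
    simp only [add_right_comm y c 1, hf (y + 1), sub_self] at h
    simp only [G]
    rw [← sub_eq_zero, ← h]
    abel
  have := hG.int_mul_eq x
  simp only [Int.cast_id, mul_one, G, zero_add, intPrimitive_zero, sub_zero] at this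
  exact eq_add_of_sub_eq' this

theorem intPrimitive_nsmul_period {f : ℤ → k} {c : ℤ} (hf : Function.Periodic f c) (n : ℕ) :
    intPrimitive f (n * c) = n • intPrimitive f c := by
  induction n with
  | zero => simp
  | succ n ih => rw [Nat.cast_succ, add_one_mul, intPrimitive_add_period hf, ih, succ_nsmul]

end

theorem Function.Periodic.exists_zmod_lift {α : Type*} {F : ℤ → α} {M : ℕ}
    (hF : Function.Periodic F M) : ∃ ψ : ZMod M → α, ∀ x : ℤ, ψ x = F x := by
  refine ⟨fun z => F (ZMod.cast z), fun x => ?_⟩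
  obtain ⟨t, ht⟩ := (ZMod.intCast_eq_intCast_iff_dvd_sub x (ZMod.cast (x : ZMod M)) M).1
    (ZMod.intCast_zmod_cast _).symm
  change F _ = F x
  rw [sub_eq_iff_eq_add'.1 ht, mul_comm]
  exact hF.int_mul t x

theorem exists_primitive_of_periodic_char_p_general
    (p : ℕ) (k : Type*) [CommRing k] (hpk : (p : k) = 0)
    (N : ℕ) (φ : ZMod N → k) :
    ∃ ψ : ZMod (N * p) → k,
      ∀ x : ℤ, ψ ((x : ℤ) : ZMod (N * p)) - ψ (((x - 1 : ℤ)) : ZMod (N * p))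
        = φ ((x : ℤ) : ZMod N) := by
  set f : ℤ → k := fun x => φ x
  have hf : Function.Periodic f N := fun x => by simp [f]
  have hF : Function.Periodic (intPrimitive f) ((N * p : ℕ) : ℤ) := fun x => by
    rw [Nat.cast_mul, mul_comm, intPrimitive_add_period (hf.nat_mul p), intPrimitive_nsmul_period hf,
      nsmul_eq_mul, hpk, zero_mul, add_zero]
  obtain ⟨ψ, hψ⟩ := hF.exists_zmod_lift
  refine ⟨ψ, fun x => ?_⟩
  rw [hψ, hψ]
  simpa [f] using intPrimitive_add_one_sub f (x - 1)

/-- periodization step.  If `k` is a commutative ring with `p · 1 = 0` (`p` prime)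
and `φ : ℤ/Nℤ → k` (`N ≥ 1`), then there is `ψ : ℤ/(Np)ℤ → k` whose difference function
realizes `φ`. -/
theorem exists_primitive_of_periodic_char_p
    (p : ℕ) (hp : p.Prime) (k : Type*) [CommRing k] (hpk : (p : k) = 0)
    (N : ℕ) (hN : 1 ≤ N) (φ : ZMod N → k) :
    ∃ ψ : ZMod (N * p) → k,
      ∀ x : ℤ, ψ ((x : ℤ) : ZMod (N * p)) - ψ (((x - 1 : ℤ)) : ZMod (N * p))
        = φ ((x : ℤ) : ZMod N) :=
  exists_primitive_of_periodic_char_p_general p k hpk N φ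
end

section
/- Let Ẑ denote the topological ring ∏_ℓ ℤ_ℓ (product over all primes ℓ, product topology), let p be a fixed prime, and let δ be the ℤ_p-linear endomorphism of the ℤ_p-module LocallyConstant(Ẑ, ℤ_p) of locally constant functions Ẑ → ℤ_p defined by (δg)(x) = g(x) − g(x − 1), where 1 is the multiplicative identity of Ẑ. Then the cokernel of δ is isomorphic, as a ℤ_p-module, to ℚ_p. In particular, a quotient of two ℤ_p-modules containing no ℚ_p-line can be a nonzero ℚ_p-vector space. -/
/-- The difference operator `δ` on locally constant functions `Ẑ → ℤ_p`,
`(δ g)(x) = g(x) - g(x - 1)`. -/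
noncomputable def deltaOp (p : ℕ) [Fact p.Prime] :
    LocallyConstant ZhatProd ℤ_[p] →ₗ[ℤ_[p]] LocallyConstant ZhatProd ℤ_[p] where
  toFun g :=
    ⟨fun x => g x - g (x - 1),
      g.isLocallyConstant.comp₂
        (g.isLocallyConstant.comp_continuous (continuous_id.sub continuous_const)) (· - ·)⟩
  map_add' g h := by
    ext x
    show (g x + h x) - (g (x - 1) + h (x - 1)) = (g x - g (x - 1)) + (h x - h (x - 1))
    ring
  map_smul' c g := by
    ext x
    show c * g x - c * g (x - 1) = c * (g x - g (x - 1))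
    ring

open Topology Uniformity Finset BigOperators Function

namespace PadicInt

variable {p : ℕ} [Fact p.Prime]

theorem ker_toZModPow_eq_ball (n : ℕ) :
    (RingHom.ker (toZModPow (p := p) n) : Set ℤ_[p]) =
      Metric.ball 0 ((p : ℝ) ^ (-(n : ℤ) + 1)) := by
  ext x
  rw [Metric.mem_ball, dist_zero_right, ← norm_le_pow_iff_norm_lt_pow_add_one,
    norm_le_pow_iff_mem_span_pow, ← ker_toZModPow, SetLike.mem_coe]

theorem isOpen_ker_toZModPow (n : ℕ) : IsOpen (RingHom.ker (toZModPow (p := p) n) : Set ℤ_[p]) := by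
  rw [ker_toZModPow_eq_ball]
  exact Metric.isOpen_ball

theorem exists_ker_toZModPow_subset {V : Set ℤ_[p]} (hV : V ∈ 𝓝 0) :
    ∃ n, (RingHom.ker (toZModPow (p := p) n) : Set ℤ_[p]) ⊆ V := by
  obtain ⟨ε, hε, hball⟩ := Metric.mem_nhds_iff.mp hV
  obtain ⟨k, hk⟩ := exists_pow_neg_lt p hε
  refine ⟨k + 1, ?_⟩
  rw [ker_toZModPow_eq_ball]
  refine (Metric.ball_subset_ball ?_).trans hball
  simpa using hk.le

theorem ker_toZModPow_le {m n : ℕ} (h : m ≤ n) :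
    RingHom.ker (toZModPow (p := p) n) ≤ RingHom.ker (toZModPow m) := by
  rw [ker_toZModPow, ker_toZModPow]
  exact Ideal.span_singleton_le_span_singleton.mpr (pow_dvd_pow _ h)

end PadicInt

theorem Padic.exists_norm_mul_pow_le_one {p : ℕ} [Fact p.Prime] (y : ℚ_[p]) :
    ∃ k : ℕ, ‖y * (p : ℚ_[p]) ^ k‖ ≤ 1 := by
  have hp : (1 : ℝ) < p := by exact_mod_cast (Fact.out : p.Prime).one_lt
  obtain ⟨k, hk⟩ := pow_unbounded_of_one_lt ‖y‖ hp
  refine ⟨k, ?_⟩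
  rw [norm_mul, Padic.norm_p_pow, zpow_neg, zpow_natCast, mul_inv_le_iff₀ (by positivity),
    one_mul]
  exact hk.le

theorem IsLocallyConstant.exists_nhds_zero_forall_add_eq {G X : Type*} [AddGroup G]
    [UniformSpace G] [IsUniformAddGroup G] [CompactSpace G] {h : G → X}
    (hh : IsLocallyConstant h) : ∃ V ∈ 𝓝 (0 : G), ∀ x, ∀ v ∈ V, h (v + x) = h x := by
  have hopen : IsOpen {xy : G × G | h xy.1 = h xy.2} := by
    simpa using ((hh.comp_continuous continuous_fst).comp₂ (hh.comp_continuous continuous_snd)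
      (· = ·)).isOpen_fiber True
  -- on a compact space every neighbourhood of the diagonal is an entourage
  have hU : {xy : G × G | h xy.1 = h xy.2} ∈ 𝓤 G := by
    rw [← nhdsSet_diagonal_eq_uniformity]
    exact hopen.mem_nhdsSet.mpr fun xy (hxy : xy.1 = xy.2) => by simp [hxy]
  rw [uniformity_eq_comap_nhds_zero] at hU
  obtain ⟨V, hV, hsub⟩ := hU
  exact ⟨V, hV, fun x v hv => (@hsub (x, v + x) (by simpa using hv)).symm⟩

theorem IsLocallyConstant.of_isOpen_preimage_zero {G H F : Type*} [AddGroup G]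
    [TopologicalSpace G] [IsTopologicalAddGroup G] [AddGroup H] [FunLike F G H]
    [AddMonoidHomClass F G H] {f : F} (hf : IsOpen (f ⁻¹' {0})) : IsLocallyConstant f :=
  (IsLocallyConstant.iff_exists_open f).mpr fun x => ⟨(· - x) ⁻¹' (f ⁻¹' {0}),
    hf.preimage (continuous_id.sub continuous_const), by simp, fun y hy => by
      simpa [sub_eq_zero] using hy⟩

namespace Function.Periodic

theorem sum_range_mul {M : Type*} [AddCommMonoid M] {u : ℕ → M} {N : ℕ} (hu : Periodic u N)
    (k : ℕ) : ∑ i ∈ range (k * N), u i = k • ∑ i ∈ range N, u i := by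
  induction k with
  | zero => simp
  | succ k ih =>
    rw [add_mul, one_mul, sum_range_add, ih, succ_nsmul]
    congr 1
    exact sum_congr rfl fun i _ => by rw [add_comm, ← smul_eq_mul, hu.nsmul k i]

theorem expect_range_mul {K : Type*} [Semifield K] [CharZero K] {u : ℕ → K} {N k : ℕ}
    (hu : Periodic u N) (hk : k ≠ 0) : 𝔼 i ∈ range (k * N), u i = 𝔼 i ∈ range N, u i := by
  rw [expect_eq_sum_div_card, expect_eq_sum_div_card, card_range, card_range, hu.sum_range_mul,
    nsmul_eq_mul, Nat.cast_mul, mul_div_mul_left _ _ (Nat.cast_ne_zero.mpr hk)]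

theorem periodic_sum_range {M : Type*} [AddCommMonoid M] {u : ℕ → M} {N : ℕ}
    (hu : Periodic u N) (hsum : ∑ i ∈ range N, u i = 0) :
    Periodic (fun k => ∑ i ∈ range k, u i) N := fun k => by
  dsimp only
  rw [add_comm, sum_range_add, hsum, zero_add]
  exact sum_congr rfl fun i _ => by rw [add_comm, hu i]

theorem map_val_natCast {X : Type*} {u : ℕ → X} {N : ℕ} (hu : Periodic u N) (k : ℕ) :
    u (k : ZMod N).val = u k := by
  rw [ZMod.val_natCast, hu.map_mod_nat]

end Function.Periodic

namespace ZhatProd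

def modulus (S : Finset Nat.Primes) (n : ℕ) : ℕ := ∏ q : S, ((q : Nat.Primes) : ℕ) ^ n

instance (S : Finset Nat.Primes) (n : ℕ) : NeZero (modulus S n) :=
  ⟨Finset.prod_ne_zero_iff.mpr fun q _ => pow_ne_zero _ q.1.2.ne_zero⟩

theorem modulus_singleton (q : Nat.Primes) (n : ℕ) : modulus {q} n = (q : ℕ) ^ n := by
  rw [modulus, Finset.prod_coe_sort {q} fun q : Nat.Primes => (q : ℕ) ^ n, prod_singleton]

theorem pairwise_coprime_pow (S : Finset Nat.Primes) (n : ℕ) :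
    Pairwise (Nat.Coprime on fun q : S => ((q : Nat.Primes) : ℕ) ^ n) :=
  fun q q' hne => Nat.Coprime.pow n n <|
    (Nat.coprime_primes q.1.2 q'.1.2).mpr fun h => hne (Subtype.ext (Subtype.ext h))

noncomputable def reduce (S : Finset Nat.Primes) (n : ℕ) : ZhatProd →+* ZMod (modulus S n) :=
  (ZMod.prodEquivPi _ (pairwise_coprime_pow S n)).symm.toRingHom.comp <|
    RingHom.pi fun q : S => (PadicInt.toZModPow n).comp (Pi.evalRingHom _ (q : Nat.Primes))

variable {S : Finset Nat.Primes} {n : ℕ}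

theorem reduce_eq_zero_iff {x : ZhatProd} :
    reduce S n x = 0 ↔ ∀ q ∈ S, PadicInt.toZModPow n (x q) = 0 := by
  change (ZMod.prodEquivPi _ (pairwise_coprime_pow S n)).symm
    (fun q : S => PadicInt.toZModPow n (x q)) = 0 ↔ _
  rw [EmbeddingLike.map_eq_zero_iff, funext_iff, Subtype.forall]
  rfl

theorem isOpen_reduce_preimage_zero (S : Finset Nat.Primes) (n : ℕ) :
    IsOpen (reduce S n ⁻¹' {0}) := by
  have : reduce S n ⁻¹' {0} =
      ⋂ q ∈ S, (fun x : ZhatProd => x q) ⁻¹' RingHom.ker (PadicInt.toZModPow (p := q) n) := by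
    ext x
    simp [reduce_eq_zero_iff]
  rw [this]
  exact isOpen_biInter_finset fun q _ =>
    (PadicInt.isOpen_ker_toZModPow n).preimage (continuous_apply q)

theorem isLocallyConstant_reduce (S : Finset Nat.Primes) (n : ℕ) :
    IsLocallyConstant (reduce S n) :=
  .of_isOpen_preimage_zero (isOpen_reduce_preimage_zero S n)

theorem exists_reduce_preimage_zero_subset {V : Set ZhatProd} (hV : V ∈ 𝓝 0) :
    ∃ S n, reduce S n ⁻¹' {0} ⊆ V := by
  rw [nhds_pi, Filter.mem_pi] at hV
  obtain ⟨I, hI, t, ht, hsub⟩ := hV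
  choose ν hν using fun q => PadicInt.exists_ker_toZModPow_subset (ht q)
  refine ⟨hI.toFinset, hI.toFinset.sup ν, fun x hx => hsub fun q hq => hν q ?_⟩
  have hqS : q ∈ hI.toFinset := hI.mem_toFinset.mpr hq
  exact PadicInt.ker_toZModPow_le (Finset.le_sup hqS) (reduce_eq_zero_iff.mp hx q hqS)

theorem _root_.LocallyConstant.exists_factorsThrough_reduce {X : Type*}
    (g : LocallyConstant ZhatProd X) : ∃ S n, (⇑g).FactorsThrough (reduce S n) := by
  obtain ⟨V, hV, hinv⟩ := g.isLocallyConstant.exists_nhds_zero_forall_add_eq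
  obtain ⟨S, n, hsub⟩ := exists_reduce_preimage_zero_subset hV
  refine ⟨S, n, fun x y hxy => ?_⟩
  have hyx : y - x ∈ V := hsub (by simp [hxy])
  simpa using (hinv x _ hyx).symm

theorem periodic_of_factorsThrough_reduce {X : Type*} {g : ZhatProd → X}
    (hg : g.FactorsThrough (reduce S n)) : Periodic (fun i : ℕ => g i) (modulus S n) :=
  fun i => hg (by simp)

theorem _root_.LocallyConstant.exists_periodic_natCast {X : Type*}
    (g : LocallyConstant ZhatProd X) : ∃ N ≠ 0, Periodic (fun i : ℕ => g i) N := by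
  obtain ⟨S, n, hg⟩ := g.exists_factorsThrough_reduce
  exact ⟨modulus S n, NeZero.ne _, periodic_of_factorsThrough_reduce hg⟩

variable {p : ℕ} [Fact p.Prime]

variable (p) in
/-- The integral of `g` against the Haar measure of `Ẑ`. -/
noncomputable def haarMean (g : LocallyConstant ZhatProd ℤ_[p]) : ℚ_[p] :=
  𝔼 i ∈ range g.exists_periodic_natCast.choose, (g i : ℚ_[p])

theorem haarMean_eq {g : LocallyConstant ZhatProd ℤ_[p]} {N : ℕ} (hN : N ≠ 0)
    (hg : Periodic (fun i : ℕ => g i) N) : haarMean p g = 𝔼 i ∈ range N, (g i : ℚ_[p]) := by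
  obtain ⟨hN', hg'⟩ := g.exists_periodic_natCast.choose_spec
  have hq : Periodic (fun i : ℕ => (g i : ℚ_[p])) N := hg.comp _
  have hq' : Periodic (fun i : ℕ => (g i : ℚ_[p])) g.exists_periodic_natCast.choose := hg'.comp _
  rw [haarMean, ← hq'.expect_range_mul hN, mul_comm, hq.expect_range_mul hN']

variable (p) in
noncomputable def haar : LocallyConstant ZhatProd ℤ_[p] →ₗ[ℤ_[p]] ℚ_[p] where
  toFun := haarMean p
  map_add' g h := by
    obtain ⟨N, hN, hg⟩ := g.exists_periodic_natCast
    obtain ⟨N', hN', hh⟩ := h.exists_periodic_natCast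
    have hg' := hg.nat_mul N'
    have hh' : Periodic (fun i : ℕ => h i) (N' * N) := mul_comm N N' ▸ hh.nat_mul N
    rw [haarMean_eq (mul_ne_zero hN' hN) hg', haarMean_eq (mul_ne_zero hN' hN) hh',
      haarMean_eq (mul_ne_zero hN' hN) (hg'.add hh'), ← expect_add_distrib]
    simp
  map_smul' c g := by
    obtain ⟨N, hN, hg⟩ := g.exists_periodic_natCast
    rw [haarMean_eq hN hg, haarMean_eq hN (hg.smul c), RingHom.id_apply, smul_expect]
    simp [Algebra.smul_def]

theorem haar_eq {g : LocallyConstant ZhatProd ℤ_[p]} {N : ℕ} (hN : N ≠ 0)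
    (hg : Periodic (fun i : ℕ => g i) N) : haar p g = 𝔼 i ∈ range N, (g i : ℚ_[p]) :=
  haarMean_eq hN hg

theorem deltaOp_apply (g : LocallyConstant ZhatProd ℤ_[p]) (x : ZhatProd) :
    deltaOp p g x = g x - g (x - 1) :=
  rfl

theorem haar_deltaOp (g : LocallyConstant ZhatProd ℤ_[p]) : haar p (deltaOp p g) = 0 := by
  obtain ⟨S, n, hg⟩ := g.exists_factorsThrough_reduce
  have hδ : (⇑(deltaOp p g)).FactorsThrough (reduce S n) := fun x y hxy => by
    have hxy' : reduce S n (x - 1) = reduce S n (y - 1) := by rw [map_sub, map_sub, hxy]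
    rw [deltaOp_apply, deltaOp_apply, hg hxy, hg hxy']
  rw [haar_eq (NeZero.ne _) (periodic_of_factorsThrough_reduce hδ), expect_eq_sum_div_card,
    div_eq_zero_iff]
  left
  let f : ℕ → ℚ_[p] := fun k => (g ((k : ZhatProd) - 1) : ℚ_[p])
  have hterm : ∀ i : ℕ, (deltaOp p g i : ℚ_[p]) = f (i + 1) - f i := fun i => by
    simp only [f, deltaOp_apply, PadicInt.coe_sub, Nat.cast_succ, add_sub_cancel_right]
  rw [sum_congr rfl fun i _ => hterm i, sum_range_sub, sub_eq_zero]
  have hM : reduce S n ((modulus S n : ℕ) - 1) = reduce S n ((0 : ℕ) - 1) := by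
    rw [map_sub, map_sub, map_natCast, map_natCast, ZMod.natCast_self, Nat.cast_zero]
  exact congrArg ((↑) : ℤ_[p] → ℚ_[p]) (hg hM)

theorem sum_range_modulus_eq_zero_of_haar_eq_zero {g : LocallyConstant ZhatProd ℤ_[p]}
    (hg : (⇑g).FactorsThrough (reduce S n)) (hg0 : haar p g = 0) :
    ∑ i ∈ range (modulus S n), g i = 0 := by
  rw [haar_eq (NeZero.ne _) (periodic_of_factorsThrough_reduce hg), expect_eq_sum_div_card,
    div_eq_zero_iff, card_range, Nat.cast_eq_zero, or_iff_left (NeZero.ne _),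
    ← PadicInt.coe_sum] at hg0
  exact PadicInt.coe_eq_zero.mp hg0

theorem exists_deltaOp_eq_of_haar_eq_zero {g : LocallyConstant ZhatProd ℤ_[p]}
    (hg0 : haar p g = 0) : ∃ h, deltaOp p h = g := by
  obtain ⟨S, n, hg⟩ := g.exists_factorsThrough_reduce
  let H : ℕ → ℤ_[p] := fun k => ∑ i ∈ range (k + 1), g i
  have hH : Periodic H (modulus S n) :=
    ((periodic_of_factorsThrough_reduce hg).periodic_sum_range
      (sum_range_modulus_eq_zero_of_haar_eq_zero hg hg0)).add_const 1
  refine ⟨⟨fun x => H (reduce S n x).val, (isLocallyConstant_reduce S n).comp fun a => H a.val⟩,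
    ?_⟩
  ext x
  set j := (reduce S n (x - 1)).val
  have hj : reduce S n ((j + 1 : ℕ) : ZhatProd) = reduce S n x := by
    rw [Nat.cast_succ, map_add, map_natCast, ZMod.natCast_zmod_val, map_sub, map_one,
      sub_add_cancel]
  change H (reduce S n x).val - H j = g x
  rw [← hj, map_natCast, hH.map_val_natCast]
  dsimp only [H]
  rw [sum_range_succ _ (j + 1), add_sub_cancel_left, hg hj]

theorem range_deltaOp_eq_ker_haar : LinearMap.range (deltaOp p) = LinearMap.ker (haar p) :=
  le_antisymm (LinearMap.range_le_ker_iff.mpr (LinearMap.ext haar_deltaOp))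
    fun _ hg => exists_deltaOp_eq_of_haar_eq_zero hg

variable (p) in
noncomputable def indicatorKerReduce (S : Finset Nat.Primes) (n : ℕ) :
    LocallyConstant ZhatProd ℤ_[p] :=
  ⟨fun x => if reduce S n x = 0 then 1 else 0,
    (isLocallyConstant_reduce S n).comp fun a => if a = 0 then 1 else 0⟩

theorem indicatorKerReduce_natCast (i : ℕ) :
    indicatorKerReduce p S n i = if modulus S n ∣ i then 1 else 0 := by
  change (if reduce S n (i : ZhatProd) = 0 then (1 : ℤ_[p]) else 0) = _
  simp_rw [map_natCast, ZMod.natCast_eq_zero_iff]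

theorem haar_indicatorKerReduce (S : Finset Nat.Primes) (n : ℕ) :
    haar p (indicatorKerReduce p S n) = (modulus S n : ℚ_[p])⁻¹ := by
  have hper : Periodic (fun i : ℕ => indicatorKerReduce p S n i) (modulus S n) :=
    periodic_of_factorsThrough_reduce fun _ _ hxy =>
      congrArg (fun a => if a = 0 then (1 : ℤ_[p]) else 0) hxy
  rw [haar_eq (NeZero.ne _) hper, expect_eq_sum_div_card, card_range, div_eq_inv_mul,
    sum_eq_single_of_mem 0 (mem_range.mpr (NeZero.pos _)) fun i hi hi0 => ?_,
    indicatorKerReduce_natCast, if_pos (dvd_zero _), PadicInt.coe_one, mul_one]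
  rw [indicatorKerReduce_natCast,
    if_neg fun h => hi0 (Nat.eq_zero_of_dvd_of_lt h (mem_range.mp hi)), PadicInt.coe_zero]

theorem haar_surjective : Surjective (haar p) := by
  intro y
  obtain ⟨k, hk⟩ := Padic.exists_norm_mul_pow_le_one y
  let q : Nat.Primes := ⟨p, Fact.out⟩
  let a : ℤ_[p] := ⟨y * (p : ℚ_[p]) ^ k, hk⟩
  refine ⟨a • indicatorKerReduce p {q} k, ?_⟩
  rw [map_smul, haar_indicatorKerReduce, modulus_singleton, Algebra.smul_def,
    PadicInt.algebraMap_apply]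
  change y * (p : ℚ_[p]) ^ k * ((p ^ k : ℕ) : ℚ_[p])⁻¹ = y
  rw [Nat.cast_pow, mul_inv_cancel_right₀ (pow_ne_zero _ (NeZero.ne _))]

end ZhatProd

/-- the cokernel of `δ` on `LocallyConstant(Ẑ, ℤ_p)` is isomorphic to `ℚ_p`
as a `ℤ_p`-module. -/
theorem coker_delta_locallyConstant_Zhat_iso_padicRationals (p : ℕ) [Fact p.Prime] :
    Nonempty
      ((LocallyConstant ZhatProd ℤ_[p] ⧸ LinearMap.range (deltaOp p)) ≃ₗ[ℤ_[p]] ℚ_[p]) :=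
  ⟨(Submodule.quotEquivOfEq _ _ ZhatProd.range_deltaOp_eq_ker_haar).trans
    (LinearMap.quotKerEquivOfSurjective _ ZhatProd.haar_surjective)⟩
end

section
/- Let L be an infinite field and let r, s be integers with r > s ≥ 0. If a polynomial P ∈ L[X₀, X₁, X₂, X₃] satisfies: for all a, d ∈ Lˣ and all b ∈ L, the algebra substitution X₀ ↦ aX₀ + bX₂, X₁ ↦ aX₁ + bX₃, X₂ ↦ dX₂, X₃ ↦ dX₃ sends P to aʳdˢ · P, then P = 0. -/
/-!
The diagonal torus forces `P` to be homogeneous of degree `r + s`. Over the dense open set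
`t ≠ 0, xt - yz ≠ 0`, the Borel group moves `[[1, 0], [z, t]]` to `[[x, y], [z, t]]`, which gives
`t ^ r * P = (xt - yz) ^ r * ψ(z, t)` with `ψ = P(1, 0, z, t)`. Since `t` is prime and does not
divide `xt - yz`, `t ^ r` divides `ψ`, so `P = (xt - yz) ^ r * χ`. A nonzero `χ` would give `P`
total degree at least `2r > r + s`.
-/

open MvPolynomial

/-- The Borel substitution `X₀ ↦ aX₀ + bX₂, X₁ ↦ aX₁ + bX₃, X₂ ↦ dX₂, X₃ ↦ dX₃`. -/
noncomputable def borelSubst {L : Type} [Field L] (a d : Lˣ) (b : L) :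
    Fin 4 → MvPolynomial (Fin 4) L :=
  ![C (a : L) * X 0 + C b * X 2,
    C (a : L) * X 1 + C b * X 3,
    C (d : L) * X 2,
    C (d : L) * X 3]

theorem eq_of_forall_units_pow_eq {K : Type*} [Field K] [Infinite K] {k n : ℕ}
    (h : ∀ c : Kˣ, (c : K) ^ k = (c : K) ^ n) : k = n := by
  have hX : (Polynomial.X ^ (k + 1) : Polynomial K) = Polynomial.X ^ (n + 1) := by
    refine Polynomial.funext fun c => ?_
    rcases eq_or_ne c 0 with rfl | hc
    · simp
    · have hck := h (Units.mk0 c hc)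
      rw [Units.val_mk0] at hck
      simp [pow_succ, hck]
  simpa using congrArg Polynomial.natDegree hX

namespace MvPolynomial

variable {σ τ R : Type*}

theorem eval_aeval [CommSemiring R] (x : σ → R) (f : τ → MvPolynomial σ R)
    (p : MvPolynomial τ R) : eval x (aeval f p) = eval (fun i => eval x (f i)) p := by
  rw [aeval_eq_bind₁]
  exact eval₂Hom_bind₁ _ _ _ _

theorem aeval_C_mul_X_monomial [CommSemiring R] (c : R) (d : σ →₀ ℕ) (a : R) :
    aeval (fun i => C c * X i) (monomial d a) = monomial d (c ^ d.degree * a) := by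
  rw [aeval_monomial, monomial_eq, C_mul, Finsupp.degree_apply, map_pow, algebraMap_eq]
  simp only [mul_pow, Finsupp.prod_mul]
  rw [Finsupp.prod, Finset.prod_pow_eq_pow_sum]
  ring

theorem coeff_aeval_C_mul_X [CommSemiring R] (c : R) (p : MvPolynomial σ R) (m : σ →₀ ℕ) :
    coeff m (aeval (fun i => C c * X i) p) = c ^ m.degree * coeff m p := by
  classical
  induction p using MvPolynomial.induction_on' with
  | monomial d a =>
    rw [aeval_C_mul_X_monomial, coeff_monomial, coeff_monomial]
    split_ifs with h <;> simp [h]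
  | add p q hp hq => rw [map_add, coeff_add, coeff_add, hp, hq, mul_add]

theorem isHomogeneous_of_forall_aeval_C_mul_X [Field R] [Infinite R] {p : MvPolynomial σ R}
    {n : ℕ} (h : ∀ c : Rˣ, aeval (fun i => C (c : R) * X i) p = (c : R) ^ n • p) :
    p.IsHomogeneous n := by
  intro m hm
  have hdeg : m.degree = n := eq_of_forall_units_pow_eq fun c => mul_right_cancel₀ hm <| by
    rw [← coeff_aeval_C_mul_X, h c, coeff_smul, smul_eq_mul]
  rwa [Finsupp.degree_eq_weight_one] at hdeg

theorem eq_of_eval_eq_of_eval_ne_zero [CommRing R] [IsDomain R] [Infinite R]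
    {h p q : MvPolynomial σ R} (hh : h ≠ 0) (H : ∀ x, eval x h ≠ 0 → eval x p = eval x q) :
    p = q := by
  refine mul_left_cancel₀ hh (funext fun x => ?_)
  by_cases hx : eval x h = 0
  · simp [hx]
  · simp [H x hx]

end MvPolynomial

section Borel

variable {L : Type} [Field L]

def IsBorelSemiInvariant (r s : ℕ) (P : MvPolynomial (Fin 4) L) : Prop :=
  ∀ (a d : Lˣ) (b : L), aeval (borelSubst a d b) P = ((a : L) ^ r * (d : L) ^ s) • P

noncomputable def detX : MvPolynomial (Fin 4) L := X 0 * X 3 - X 1 * X 2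

theorem eval_detX (x : Fin 4 → L) : eval x detX = x 0 * x 3 - x 1 * x 2 := by
  simp [detX]

theorem detX_ne_zero : (detX : MvPolynomial (Fin 4) L) ≠ 0 := fun h => by
  simpa [eval_detX] using congrArg (eval ![1, 0, 0, 1]) h

theorem not_X_dvd_detX : ¬ X 3 ∣ (detX : MvPolynomial (Fin 4) L) := fun ⟨q, hq⟩ => by
  simpa [eval_detX] using congrArg (eval ![0, 1, 1, 0]) hq

theorem totalDegree_detX_pow (r : ℕ) :
    (detX ^ r : MvPolynomial (Fin 4) L).totalDegree = 2 * r := by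
  have h : (detX : MvPolynomial (Fin 4) L).IsHomogeneous 2 :=
    ((isHomogeneous_X L 0).mul (isHomogeneous_X L 3)).sub
      ((isHomogeneous_X L 1).mul (isHomogeneous_X L 2))
  rw [(h.pow r).totalDegree (pow_ne_zero r detX_ne_zero)]

variable [Infinite L] {r s : ℕ} {P : MvPolynomial (Fin 4) L}

theorem IsBorelSemiInvariant.isHomogeneous (hP : IsBorelSemiInvariant r s P) :
    P.IsHomogeneous (r + s) := by
  refine isHomogeneous_of_forall_aeval_C_mul_X fun c => ?_
  have hc : borelSubst c c 0 = fun i => C (c : L) * X i := by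
    funext i
    fin_cases i <;> simp [borelSubst]
  rw [← hc, hP, pow_add]

theorem IsBorelSemiInvariant.X_pow_mul_eq_detX_pow_mul (hP : IsBorelSemiInvariant r s P) :
    X 3 ^ r * P = detX ^ r * aeval ![1, 0, X 2, X 3] P := by
  refine eq_of_eval_eq_of_eval_ne_zero (mul_ne_zero (X_ne_zero 3) detX_ne_zero) fun x hx => ?_
  simp only [map_mul, eval_X, eval_detX, mul_ne_zero_iff] at hx
  obtain ⟨ht, hΔ⟩ := hx
  -- `[[Δ / t, y / t], [0, 1]]` carries `[[1, 0], [z, t]]` to `[[x, y], [z, t]]`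
  let a : Lˣ := Units.mk0 _ (div_ne_zero hΔ ht)
  have hmove : (fun i => eval ![1, 0, x 2, x 3] (borelSubst a 1 (x 1 / x 3) i)) = x := by
    funext i
    fin_cases i <;> simp [a, borelSubst]
    · field_simp
      ring
    · field_simp
  have hψ : eval x (aeval ![1, 0, X 2, X 3] P) = eval ![1, 0, x 2, x 3] P := by
    rw [eval_aeval]
    congr
    funext i
    fin_cases i <;> simp
  have hPx := congrArg (eval ![1, 0, x 2, x 3]) (hP a 1 (x 1 / x 3))
  rw [eval_aeval, hmove, smul_eval] at hPx
  rw [map_mul, map_mul, map_pow, map_pow, eval_X, eval_detX, hψ, hPx, Units.val_mk0,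
    Units.val_one, one_pow, mul_one, div_pow]
  field_simp

end Borel

/-- over an infinite field, if `r > s ≥ 0` then every polynomial
`P ∈ L[X₀,X₁,X₂,X₃]` transforming under the Borel substitution by the character `aʳdˢ`
is zero. -/
theorem semiInvariant_eq_zero_of_gt
    (L : Type) [Field L] [Infinite L] (r s : ℕ) (hrs : s < r)
    (P : MvPolynomial (Fin 4) L)
    (hP : ∀ (a d : Lˣ) (b : L),
      aeval (borelSubst a d b) P = ((a : L) ^ r * (d : L) ^ s) • P) :
    P = 0 := by
  have key := IsBorelSemiInvariant.X_pow_mul_eq_detX_pow_mul hP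
  obtain ⟨χ, hχ⟩ : X 3 ^ r ∣ aeval ![1, 0, X 2, X 3] P :=
    (X_prime (i := 3)).pow_dvd_of_dvd_mul_left r
      (fun h => not_X_dvd_detX ((X_prime (i := 3)).dvd_of_dvd_pow h)) ⟨P, key.symm⟩
  have hPχ : P = detX ^ r * χ :=
    mul_left_cancel₀ (pow_ne_zero r (X_ne_zero 3)) (by rw [key, hχ]; ring)
  by_contra hP0
  have hχ0 : χ ≠ 0 := by rintro rfl; exact hP0 (by simpa using hPχ)
  have hdeg := (IsBorelSemiInvariant.isHomogeneous hP).totalDegree_le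
  rw [hPχ, totalDegree_mul_of_isDomain (pow_ne_zero r detX_ne_zero) hχ0,
    totalDegree_detX_pow] at hdeg
  omega
end

section
/- The image of SL₂(ℤ) under the diagonal embedding into the profinite group ∏_ℓ SL₂(ℤ_ℓ) (product over all primes ℓ, with the product topology) is dense. -/
/-- The topology on `SL₂` over a topological ring, induced from the space of matrices. -/
instance (R : Type*) [CommRing R] [TopologicalSpace R] :
    TopologicalSpace (Matrix.SpecialLinearGroup (Fin 2) R) :=
  inferInstanceAs (TopologicalSpace { A : Matrix (Fin 2) (Fin 2) R // A.det = 1 })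

open Matrix Topology Function
open scoped MatrixGroups

namespace SL2

variable {R : Type*} [CommRing R]

def E12 (x : R) : SL(2, R) := ⟨!![1, x; 0, 1], by simp [det_fin_two_of]⟩

def E21 (x : R) : SL(2, R) := ⟨!![1, 0; x, 1], by simp [det_fin_two_of]⟩

@[simp] lemma coe_E12 (x : R) : (E12 x : Matrix (Fin 2) (Fin 2) R) = !![1, x; 0, 1] := rfl

@[simp] lemma coe_E21 (x : R) : (E21 x : Matrix (Fin 2) (Fin 2) R) = !![1, 0; x, 1] := rfl

lemma E21_zero : E21 (0 : R) = 1 := by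
  ext i j
  fin_cases i <;> fin_cases j <;> simp

lemma E21_add (x y : R) : E21 (x + y) = E21 x * E21 y := by
  ext i j
  fin_cases i <;> fin_cases j <;> simp

lemma E21_mul_apply_one_zero (t : R) (A : SL(2, R)) :
    (E21 t * A) 1 0 = t * A 0 0 + A 1 0 := by
  simp [mul_apply, Fin.sum_univ_two]

lemma exists_eq_E12_mul_E21_mul_E12_of_isUnit {A : SL(2, R)} (hA : IsUnit (A 1 0)) :
    ∃ x y z : R, A = E12 x * E21 y * E12 z := by
  obtain ⟨u, hu⟩ := hA.exists_right_inv
  have hdet : A 0 0 * A 1 1 - A 0 1 * A 1 0 = 1 := by rw [← det_fin_two, A.det_coe]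
  refine ⟨(A 0 0 - 1) * u, A 1 0, (A 1 1 - 1) * u, ?_⟩
  ext i j
  fin_cases i <;> fin_cases j <;> simp
  · linear_combination (1 - A 0 0) * hu
  · linear_combination -(A 0 1 + (A 0 0 - 1) * (A 1 1 - 1) * u) * hu - u * hdet
  · linear_combination (1 - A 1 1) * hu

lemma exists_isUnit_E21_mul_apply_one_zero [IsLocalRing R] (A : SL(2, R)) :
    ∃ t : R, IsUnit ((E21 t * A) 1 0) := by
  simp only [E21_mul_apply_one_zero]
  by_cases hc : IsUnit (A 1 0)
  · exact ⟨0, by simpa using hc⟩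
  -- `a d - b c = 1` with `c` a nonunit forces `a` to be a unit, and then so is `a + c`.
  refine ⟨1, ?_⟩
  have hdet : A 0 0 * A 1 1 + -(A 0 1 * A 1 0) = 1 := by
    rw [← sub_eq_add_neg, ← det_fin_two, A.det_coe]
  have ha : IsUnit (A 0 0) := isUnit_of_mul_isUnit_left <|
    (IsLocalRing.isUnit_or_isUnit_of_add_one hdet).resolve_right
      fun h => hc (isUnit_of_mul_isUnit_right ((IsUnit.neg_iff _).mp h))
  have hac : IsUnit (1 * A 0 0 + A 1 0 + -A 1 0) := by simpa using ha
  exact (IsLocalRing.isUnit_or_isUnit_of_isUnit_add hac).resolve_right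
    fun h => hc ((IsUnit.neg_iff _).mp h)

def elementaryProduct (v : Fin 4 → R) : SL(2, R) :=
  E21 (v 0) * E12 (v 1) * E21 (v 2) * E12 (v 3)

lemma elementaryProduct_surjective [IsLocalRing R] :
    Surjective (elementaryProduct : (Fin 4 → R) → SL(2, R)) := by
  intro A
  obtain ⟨t, ht⟩ := exists_isUnit_E21_mul_apply_one_zero A
  obtain ⟨x, y, z, hxyz⟩ := exists_eq_E12_mul_E21_mul_E12_of_isUnit ht
  refine ⟨![-t, x, y, z], ?_⟩
  calc elementaryProduct ![-t, x, y, z] = E21 (-t) * (E12 x * E21 y * E12 z) := by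
        simp [elementaryProduct, mul_assoc]
    _ = A := by rw [← hxyz, ← mul_assoc, ← E21_add, neg_add_cancel, E21_zero, one_mul]

section map

variable {S : Type*} [CommRing S] (f : R →+* S)

lemma map_E12 (x : R) : Matrix.SpecialLinearGroup.map f (E12 x) = E12 (f x) := by
  ext i j
  fin_cases i <;> fin_cases j <;> simp

lemma map_E21 (x : R) : Matrix.SpecialLinearGroup.map f (E21 x) = E21 (f x) := by
  ext i j
  fin_cases i <;> fin_cases j <;> simp

lemma map_elementaryProduct (v : Fin 4 → R) :
    Matrix.SpecialLinearGroup.map f (elementaryProduct v) = elementaryProduct (f ∘ v) := by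
  simp [elementaryProduct, map_E12, map_E21]

end map

lemma continuous_elementaryProduct [TopologicalSpace R] [IsTopologicalRing R] :
    Continuous (elementaryProduct : (Fin 4 → R) → SL(2, R)) := by
  suffices h : Continuous fun v : Fin 4 → R =>
      ((elementaryProduct v : SL(2, R)) : Matrix (Fin 2) (Fin 2) R) from
    continuous_induced_rng.2 h
  simp only [elementaryProduct, Matrix.SpecialLinearGroup.coe_mul, coe_E12, coe_E21]
  fun_prop

end SL2

lemma PadicInt.exists_toZModPow_eq_imp_mem {p : ℕ} [Fact p.Prime] {x : ℤ_[p]} {U : Set ℤ_[p]}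
    (hU : U ∈ 𝓝 x) : ∃ k : ℕ, ∀ y, toZModPow k y = toZModPow k x → y ∈ U := by
  obtain ⟨ε, hε, hball⟩ := Metric.mem_nhds_iff.mp hU
  obtain ⟨k, hk⟩ := exists_pow_neg_lt p hε
  refine ⟨k, fun y hy => hball ?_⟩
  have hspan : y - x ∈ Ideal.span {(p : ℤ_[p]) ^ k} := by
    rw [← ker_toZModPow, RingHom.mem_ker, map_sub, hy, sub_self]
  rw [Metric.mem_ball, dist_eq_norm]
  exact ((norm_le_pow_iff_mem_span_pow _ _).mpr hspan).trans_lt hk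

lemma ZMod.exists_intCast_eq_of_pairwise_coprime {ι : Type*} [Fintype ι] (a : ι → ℕ)
    (hcop : Pairwise (Nat.Coprime on a)) (s : ∀ i, ZMod (a i)) :
    ∃ N : ℤ, ∀ i, (N : ZMod (a i)) = s i := by
  obtain ⟨m, hm⟩ := (prodEquivPi a hcop).surjective s
  obtain ⟨N, rfl⟩ := intCast_surjective m
  exact ⟨N, fun i => by rw [← hm, map_intCast, Pi.intCast_apply]⟩

lemma denseRange_intCast_pi_padicInt :
    DenseRange fun n : ℤ => fun q : Nat.Primes => (n : ℤ_[q]) := by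
  intro x
  rw [mem_closure_iff_nhds]
  intro U hU
  rw [nhds_pi] at hU
  obtain ⟨I, hI, t, ht, hsub⟩ := Filter.mem_pi.mp hU
  have := hI.fintype
  choose k hk using fun q : I => PadicInt.exists_toZModPow_eq_imp_mem (ht q)
  have hcop : Pairwise (Nat.Coprime on fun q : I => ((q : Nat.Primes) : ℕ) ^ k q) :=
    fun q q' hne => Nat.coprime_pow_primes _ _ q.1.2 q'.1.2
      fun h => hne (Subtype.ext (Nat.Primes.coe_nat_injective h))
  obtain ⟨N, hN⟩ := ZMod.exists_intCast_eq_of_pairwise_coprime _ hcop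
    fun q => PadicInt.toZModPow (k q) (x (q : Nat.Primes))
  exact ⟨_, hsub fun q hq => hk ⟨q, hq⟩ _ (by rw [map_intCast, hN]), N, rfl⟩

/-- strong approximation: the image of `SL₂(ℤ)` under the diagonal embedding
into `∏_ℓ SL₂(ℤ_ℓ)` is dense. -/
theorem denseRange_SL2Z_in_prod_SL2_padicInt :
    DenseRange (fun γ : Matrix.SpecialLinearGroup (Fin 2) ℤ =>
      fun q : Nat.Primes =>
        Matrix.SpecialLinearGroup.map (Int.castRingHom ℤ_[(q : ℕ)]) γ) := by
  set F : (Fin 4 → ∀ q : Nat.Primes, ℤ_[q]) → ∀ q : Nat.Primes, SL(2, ℤ_[q]) :=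
    fun v q => SL2.elementaryProduct fun i => v i q
  have hF_surj : Surjective F := by
    intro x
    choose v hv using fun q => SL2.elementaryProduct_surjective (x q)
    exact ⟨fun i q => v q i, funext hv⟩
  have hF_cont : Continuous F :=
    continuous_pi fun q => SL2.continuous_elementaryProduct.comp (by fun_prop)
  have hdense := hF_surj.denseRange.comp
    (DenseRange.piMap fun _ => denseRange_intCast_pi_padicInt) hF_cont
  refine hdense.mono ?_
  rintro _ ⟨v, rfl⟩
  exact ⟨SL2.elementaryProduct v, funext fun q => SL2.map_elementaryProduct _ v⟩
end
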